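/- arXiv:2206.04932 — 5 statements merged into one kernel-verified Lean document; each statement's English description precedes it below -/
import Mathlib

section
/- Let μ be a probability measure on ℝ. Suppose there exist a ≥ 0, b ∈ ℝ and a measurable function k : ℝ → [0,∞) that is nondecreasing on (−∞,0), nonincreasing on (0,∞), not Lebesgue-almost-everywhere zero, satisfies ∫_ℝ min(1,t²)·k(t)/|t| dt < ∞, and such that F_μ(z) = z − b − a/z + ∫_ℝ (1/(t−z) − t/(1+t²))·|t|·k(t) dt for all z ∈ ℂ⁺. Set α = inf{x ∈ ℝ : k(x) ≠ 0} ∈ [−∞,0] and β = sup{x ∈ ℝ : k(x) ≠ 0} ∈ [0,∞]. Then the restriction of μ to the open interval (α,β) is absolutely continuous with respect to Lebesgue measure. -/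
/-
Put `z = x + iε`. Since `F_μ = 1 / G_μ`, the Poisson integral `∫ ε / ((x - t)² + ε²) dμ(t)`,
which is `-Im G_μ(z) = Im F_μ(z) / |F_μ(z)|²`, is at most `1 / Im F_μ(z)`, and the Nevanlinna form
gives `Im F_μ(z) ≥ ∫ ε / ((t - x)² + ε²) |t| k(t) dt`. Near a point `x₀ ≠ 0` of `(α, β)`
unimodality bounds `|t| k(t)` below, so `Im F_μ` is bounded below uniformly for small `ε`, and
Fatou's lemma turns the resulting bound on Poisson integrals into `μ U ≤ C |U|` for open `U`.
If `α < 0 < β`, then `k ≥ c > 0` on some `(0, v]`, so `Im F_μ(iε) / ε ≳ log (1 / ε) → ∞`, while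
`μ {0} ≤ ε / Im F_μ(iε)`: there is no atom at `0`.
-/

open MeasureTheory Complex Set

/-- The Cauchy transform of a measure on ℝ. -/
noncomputable def cauchyTransform (μ : Measure ℝ) (z : ℂ) : ℂ :=
  ∫ x, (z - (x : ℂ))⁻¹ ∂μ

/-- The F-transform (reciprocal Cauchy transform) of a measure on ℝ. -/
noncomputable def Ftransform (μ : Measure ℝ) (z : ℂ) : ℂ :=
  (cauchyTransform μ z)⁻¹

open Real Filter Topology
open scoped ENNReal

/-- `π` times the Poisson kernel of the upper half-plane at height `ε`; it equals
`Im (x - ε * I)⁻¹`. -/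
noncomputable def halfPlanePoissonKernel (ε x : ℝ) : ℝ := ε / (x ^ 2 + ε ^ 2)

section PoissonKernel

variable {ε : ℝ}

lemma halfPlanePoissonKernel_nonneg (hε : 0 < ε) (x : ℝ) : 0 ≤ halfPlanePoissonKernel ε x := by
  unfold halfPlanePoissonKernel; positivity

lemma halfPlanePoissonKernel_le (hε : 0 < ε) (x : ℝ) : halfPlanePoissonKernel ε x ≤ ε⁻¹ := by
  calc halfPlanePoissonKernel ε x ≤ ε / ε ^ 2 :=
        div_le_div_of_nonneg_left hε.le (by positivity) (le_add_of_nonneg_left (sq_nonneg x))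
    _ = ε⁻¹ := by field_simp

lemma halfPlanePoissonKernel_zero (ε : ℝ) : halfPlanePoissonKernel ε 0 = ε⁻¹ := by
  simp [halfPlanePoissonKernel, sq]

@[fun_prop]
lemma measurable_halfPlanePoissonKernel (ε : ℝ) : Measurable (halfPlanePoissonKernel ε) := by
  unfold halfPlanePoissonKernel; fun_prop

lemma continuous_halfPlanePoissonKernel (hε : 0 < ε) : Continuous (halfPlanePoissonKernel ε) :=
  continuous_const.div (by fun_prop) fun x => by positivity

lemma hasDerivAt_arctan_div (hε : 0 < ε) (x : ℝ) :
    HasDerivAt (fun y => Real.arctan (y / ε)) (halfPlanePoissonKernel ε x) x := by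
  refine ((Real.hasDerivAt_arctan (x / ε)).comp x ((hasDerivAt_id x).div_const ε)).congr_deriv ?_
  simp only [halfPlanePoissonKernel]
  field_simp
  ring

lemma integral_halfPlanePoissonKernel (hε : 0 < ε) (p q : ℝ) :
    ∫ x in p..q, halfPlanePoissonKernel ε x = Real.arctan (q / ε) - Real.arctan (p / ε) :=
  intervalIntegral.integral_eq_sub_of_hasDerivAt (fun x _ => hasDerivAt_arctan_div hε x)
    ((continuous_halfPlanePoissonKernel hε).intervalIntegrable p q)

lemma integral_halfPlanePoissonKernel_sub (hε : 0 < ε) (a δ : ℝ) :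
    ∫ s in (a - δ)..(a + δ), halfPlanePoissonKernel ε (s - a) = 2 * Real.arctan (δ / ε) := by
  rw [intervalIntegral.integral_comp_sub_right, integral_halfPlanePoissonKernel hε,
    sub_sub_cancel_left, add_sub_cancel_left, neg_div, arctan_neg]
  ring

lemma tendsto_integral_halfPlanePoissonKernel_sub (a : ℝ) {δ : ℝ} (hδ : 0 < δ) :
    Tendsto (fun ε => ∫ s in (a - δ)..(a + δ), halfPlanePoissonKernel ε (s - a))
      (𝓝[>] 0) (𝓝 π) := by
  have harg : Tendsto (fun ε : ℝ => δ / ε) (𝓝[>] 0) atTop :=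
    tendsto_inv_nhdsGT_zero.const_mul_atTop hδ
  have h := ((tendsto_arctan_atTop.mono_right nhdsWithin_le_nhds).comp harg).const_mul 2
  rw [mul_div_cancel₀ π two_ne_zero] at h
  exact h.congr' (eventually_nhdsWithin_of_forall fun ε hε =>
    (integral_halfPlanePoissonKernel_sub hε a δ).symm)

lemma integrable_halfPlanePoissonKernel_sub (μ : Measure ℝ) [IsFiniteMeasure μ] (hε : 0 < ε)
    (x : ℝ) : Integrable (fun t => halfPlanePoissonKernel ε (x - t)) μ :=
  Integrable.of_bound (by fun_prop : Measurable _).aestronglyMeasurable ε⁻¹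
    (Eventually.of_forall fun t => by
      rw [Real.norm_of_nonneg (halfPlanePoissonKernel_nonneg hε _)]
      exact halfPlanePoissonKernel_le hε _)

end PoissonKernel

lemma im_inv_ofReal_sub (x ε t : ℝ) :
    (((t : ℂ) - (x + ε * I))⁻¹).im = halfPlanePoissonKernel ε (t - x) := by
  simp only [inv_im, sub_im, ofReal_im, add_im, mul_im, ofReal_re, I_im, mul_one, I_re, mul_zero,
    add_zero, zero_add, zero_sub, neg_neg, normSq_apply, sub_re, add_re, mul_re, sub_self, mul_neg,
    neg_mul, halfPlanePoissonKernel]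
  ring

lemma im_inv_sub_ofReal (x ε t : ℝ) :
    (((x : ℂ) + ε * I - t)⁻¹).im = -halfPlanePoissonKernel ε (x - t) := by
  simp only [inv_im, sub_im, add_im, ofReal_im, mul_im, ofReal_re, I_im, mul_one, I_re, mul_zero,
    add_zero, zero_add, sub_zero, normSq_apply, sub_re, add_re, mul_re, sub_self,
    halfPlanePoissonKernel]
  ring

lemma neg_im_inv_le {w : ℂ} {c : ℝ} (hc : 0 < c) (h : c ≤ w.im) : -(w⁻¹).im ≤ c⁻¹ := by
  have him : 0 < w.im := hc.trans_le h
  have hnormSq : c * w.im ≤ normSq w := by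
    rw [normSq_apply]; nlinarith [mul_self_nonneg w.re]
  rw [inv_im, neg_div, neg_neg]
  calc w.im / normSq w ≤ w.im / (c * w.im) :=
        div_le_div_of_nonneg_left him.le (by positivity) hnormSq
    _ = c⁻¹ := by field_simp

section CauchyTransform

variable {μ : Measure ℝ} [IsFiniteMeasure μ]

lemma integrable_inv_sub_ofReal {z : ℂ} (hz : 0 < z.im) :
    Integrable (fun t : ℝ => (z - t)⁻¹) μ := by
  refine Integrable.of_bound (by fun_prop : Measurable _).aestronglyMeasurable (z.im)⁻¹
    (Eventually.of_forall fun t => ?_)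
  rw [norm_inv]
  refine inv_anti₀ hz ((le_abs_self _).trans ?_)
  simpa using abs_im_le_norm (z - t)

lemma im_cauchyTransform (x : ℝ) {ε : ℝ} (hε : 0 < ε) :
    (cauchyTransform μ (x + ε * I)).im = -∫ t, halfPlanePoissonKernel ε (x - t) ∂μ := by
  have hint := integrable_inv_sub_ofReal (μ := μ) (z := x + ε * I) (by simpa using hε)
  have him := integral_im hint
  simp only [RCLike.im_to_complex, im_inv_sub_ofReal] at him
  rw [cauchyTransform, ← him, integral_neg]

lemma integral_halfPlanePoissonKernel_le_of_le_im {x ε c : ℝ} (hε : 0 < ε) (hc : 0 < c)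
    (h : c ≤ (Ftransform μ (x + ε * I)).im) : ∫ t, halfPlanePoissonKernel ε (x - t) ∂μ ≤ c⁻¹ := by
  have := neg_im_inv_le hc h
  rwa [Ftransform, inv_inv, im_cauchyTransform x hε, neg_neg] at this

lemma measureReal_singleton_le (x : ℝ) {ε : ℝ} (hε : 0 < ε) :
    μ.real {x} ≤ ε * ∫ t, halfPlanePoissonKernel ε (x - t) ∂μ := by
  have h := setIntegral_le_integral (s := {x}) (integrable_halfPlanePoissonKernel_sub μ hε x)
    (Eventually.of_forall fun t => halfPlanePoissonKernel_nonneg hε (x - t))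
  rw [integral_singleton, sub_self, halfPlanePoissonKernel_zero, smul_eq_mul] at h
  calc μ.real {x} = ε * (μ.real {x} * ε⁻¹) := by field_simp
    _ ≤ _ := by gcongr

lemma measure_singleton_eq_zero_of_tendsto {x : ℝ}
    (h : Tendsto (fun ε : ℝ => (Ftransform μ (x + ε * I)).im / ε) (𝓝[>] 0) atTop) : μ {x} = 0 := by
  have hle : ∀ᶠ ε : ℝ in 𝓝[>] 0, μ.real {x} ≤ ((Ftransform μ (x + ε * I)).im / ε)⁻¹ := by
    filter_upwards [h.eventually_gt_atTop 0, self_mem_nhdsWithin] with ε hpos (hε : 0 < ε)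
    have hc : 0 < (Ftransform μ (x + ε * I)).im := by
      simpa [div_pos_iff, hε, not_lt_of_gt hε] using hpos
    calc μ.real {x} ≤ ε * ∫ t, halfPlanePoissonKernel ε (x - t) ∂μ := measureReal_singleton_le x hε
      _ ≤ ε * (Ftransform μ (x + ε * I)).im⁻¹ := by
          gcongr; exact integral_halfPlanePoissonKernel_le_of_le_im hε hc le_rfl
      _ = _ := by rw [inv_div, div_eq_mul_inv]
  have h0 : μ.real {x} ≤ 0 := ge_of_tendsto h.inv_tendsto_atTop hle
  exact (measureReal_eq_zero_iff).1 (le_antisymm h0 measureReal_nonneg)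

end CauchyTransform

section AbsolutelyContinuous

variable {α : Type*} [TopologicalSpace α] [MeasurableSpace α] {μ ν : Measure α}

lemma absolutelyContinuous_of_forall_isOpen_le [ν.OuterRegular] {C : ℝ≥0∞} (hC : C ≠ ∞)
    (h : ∀ U, IsOpen U → μ U ≤ C * ν U) : μ ≪ ν := by
  refine Measure.AbsolutelyContinuous.mk fun s _ hs => le_antisymm ?_ zero_le
  refine ENNReal.le_of_forall_pos_le_add fun δ hδ _ => ?_
  obtain ⟨U, hsU, hU, hνU⟩ := s.exists_isOpen_lt_of_lt (δ / C) (by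
    rw [hs]; exact ENNReal.div_pos (by exact_mod_cast hδ.ne') hC)
  calc μ s ≤ μ U := measure_mono hsU
    _ ≤ C * ν U := h U hU
    _ ≤ C * (δ / C) := by gcongr
    _ ≤ δ := ENNReal.mul_div_le
    _ = 0 + δ := (zero_add _).symm

lemma absolutelyContinuous_restrict_of_forall_nhdsWithin [SecondCountableTopology α]
    {S : Set α} (h : ∀ x ∈ S, ∃ u ∈ 𝓝[S] x, μ.restrict u ≪ ν) : μ.restrict S ≪ ν := by
  refine Measure.AbsolutelyContinuous.mk fun s hs hνs => ?_
  rw [Measure.restrict_apply hs]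
  refine measure_null_of_locally_null _ fun x hx => ?_
  obtain ⟨u, hu, hμu⟩ := h x hx.2
  refine ⟨s ∩ S ∩ u, inter_mem self_mem_nhdsWithin (nhdsWithin_mono _ inter_subset_right hu), ?_⟩
  refine measure_mono_null (inter_subset_inter_left _ inter_subset_left) ?_
  rw [← Measure.restrict_apply hs]
  exact hμu hνs

end AbsolutelyContinuous

lemma one_le_liminf_setLIntegral_halfPlanePoissonKernel {U : Set ℝ} (hU : IsOpen U) {t : ℝ}
    (ht : t ∈ U) {ε : ℕ → ℝ} (hε_pos : ∀ n, 0 < ε n) (hε : Tendsto ε atTop (𝓝[>] 0)) :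
    1 ≤ liminf (fun n => ∫⁻ x in U, ENNReal.ofReal (halfPlanePoissonKernel (ε n) (x - t) / π))
      atTop := by
  obtain ⟨δ, hδ, hball⟩ := Metric.isOpen_iff.1 hU t ht
  rw [Real.ball_eq_Ioo] at hball
  have hlim := ENNReal.tendsto_ofReal
    (((tendsto_integral_halfPlanePoissonKernel_sub t hδ).comp hε).div_const π)
  rw [div_self pi_ne_zero, ENNReal.ofReal_one] at hlim
  refine hlim.liminf_eq.symm.le.trans (liminf_le_liminf (Eventually.of_forall fun n => ?_))
  have hint : IntegrableOn (fun x => halfPlanePoissonKernel (ε n) (x - t) / π)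
      (Ioo (t - δ) (t + δ)) :=
    (((continuous_halfPlanePoissonKernel (hε_pos n)).comp (continuous_sub_right t)).div_const
      π).integrableOn_Icc.mono_set Ioo_subset_Icc_self
  calc ENNReal.ofReal ((∫ s in (t - δ)..(t + δ), halfPlanePoissonKernel (ε n) (s - t)) / π)
      = ∫⁻ x in Ioo (t - δ) (t + δ),
          ENNReal.ofReal (halfPlanePoissonKernel (ε n) (x - t) / π) := by
        rw [intervalIntegral.integral_of_le (by linarith), integral_Ioc_eq_integral_Ioo,
          ← integral_div, ofReal_integral_eq_lintegral_ofReal hint (Eventually.of_forall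
            fun x => div_nonneg (halfPlanePoissonKernel_nonneg (hε_pos n) _) pi_pos.le)]
    _ ≤ _ := lintegral_mono_set hball

lemma measure_le_of_integral_halfPlanePoissonKernel_le {μ : Measure ℝ} [IsFiniteMeasure μ]
    {U : Set ℝ} (hU : IsOpen U) {M : ℝ}
    (h : ∀ᶠ ε in 𝓝[>] 0, ∀ x ∈ U, ∫ t, halfPlanePoissonKernel ε (x - t) ∂μ ≤ M) :
    μ U ≤ ENNReal.ofReal (M / π) * volume U := by
  set ε : ℕ → ℝ := fun n => 1 / (n + 1)
  have hε_pos : ∀ n, 0 < ε n := fun n => by positivity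
  have hε : Tendsto ε atTop (𝓝[>] 0) := tendsto_nhdsWithin_iff.2
    ⟨tendsto_one_div_add_atTop_nhds_zero_nat, Eventually.of_forall hε_pos⟩
  set g : ℕ → ℝ → ℝ≥0∞ := fun n t =>
    ∫⁻ x in U, ENNReal.ofReal (halfPlanePoissonKernel (ε n) (x - t) / π)
  have hg_meas : ∀ n, Measurable (g n) := fun n => Measurable.lintegral_prod_right
    (by fun_prop : Measurable fun p : ℝ × ℝ =>
      ENNReal.ofReal (halfPlanePoissonKernel (ε n) (p.2 - p.1) / π))
  have hg_upper : ∀ᶠ n in atTop, ∫⁻ t, g n t ∂μ ≤ ENNReal.ofReal (M / π) * volume U := by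
    filter_upwards [hε.eventually h] with n hn
    rw [lintegral_lintegral_swap (by fun_prop)]
    calc ∫⁻ x in U, ∫⁻ t, ENNReal.ofReal (halfPlanePoissonKernel (ε n) (x - t) / π) ∂μ
        ≤ ∫⁻ _ in U, ENNReal.ofReal (M / π) := by
          refine setLIntegral_mono measurable_const fun x hx => ?_
          rw [← ofReal_integral_eq_lintegral_ofReal
            ((integrable_halfPlanePoissonKernel_sub μ (hε_pos n) x).div_const π)
            (Eventually.of_forall fun t => div_nonneg (halfPlanePoissonKernel_nonneg (hε_pos n) _)
              pi_pos.le), integral_div]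
          exact ENNReal.ofReal_le_ofReal (div_le_div_of_nonneg_right (hn x hx) pi_pos.le)
      _ = ENNReal.ofReal (M / π) * volume U := by rw [setLIntegral_const, mul_comm]
  calc μ U = ∫⁻ _ in U, 1 ∂μ := (setLIntegral_one U).symm
    _ ≤ ∫⁻ t in U, liminf (fun n => g n t) atTop ∂μ :=
        setLIntegral_mono (Measurable.liminf hg_meas) fun t ht =>
          one_le_liminf_setLIntegral_halfPlanePoissonKernel hU ht hε_pos hε
    _ ≤ ∫⁻ t, liminf (fun n => g n t) atTop ∂μ := setLIntegral_le_lintegral _ _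
    _ ≤ liminf (fun n => ∫⁻ t, g n t ∂μ) atTop := lintegral_liminf_le hg_meas
    _ ≤ ENNReal.ofReal (M / π) * volume U := (liminf_le_liminf hg_upper).trans_eq (liminf_const _)

def HasNevanlinnaForm (F : ℂ → ℂ) (a b : ℝ) (w : ℝ → ℝ) : Prop :=
  ∀ z : ℂ, 0 < z.im → F z = z - (b : ℂ) - (a : ℂ) / z +
    ∫ t : ℝ, (((t : ℂ) - z)⁻¹ - (t : ℂ) / (1 + (t : ℂ) ^ 2)) * ((w t : ℝ) : ℂ)

lemma norm_inv_sub_sub_div_le {z : ℂ} (hz : 0 < z.im) (t : ℝ) :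
    ‖((t : ℂ) - z)⁻¹ - t / (1 + (t : ℂ) ^ 2)‖ ≤ ((1 + ‖z‖ ^ 2) / z.im + ‖z‖) / (1 + t ^ 2) := by
  have hdist : z.im ≤ ‖(t : ℂ) - z‖ :=
    (le_abs_self _).trans (by simpa using abs_im_le_norm ((t : ℂ) - z))
  have hsub : (t : ℂ) - z ≠ 0 := norm_pos_iff.1 (hz.trans_le hdist)
  have hone : 1 + (t : ℂ) ^ 2 = ((1 + t ^ 2 : ℝ) : ℂ) := by push_cast; ring
  have hone0 : ((1 + t ^ 2 : ℝ) : ℂ) ≠ 0 := ofReal_ne_zero.2 (by positivity)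
  have hnum : ‖1 + (t : ℂ) * z‖ ≤ ((1 + ‖z‖ ^ 2) / z.im + ‖z‖) * ‖(t : ℂ) - z‖ := by
    have ht : |t| ≤ ‖(t : ℂ) - z‖ + ‖z‖ := by simpa using norm_le_norm_sub_add (t : ℂ) z
    calc ‖1 + (t : ℂ) * z‖ ≤ 1 + |t| * ‖z‖ := by simpa using norm_add_le 1 ((t : ℂ) * z)
      _ ≤ 1 + (‖(t : ℂ) - z‖ + ‖z‖) * ‖z‖ := by gcongr
      _ = (1 + ‖z‖ ^ 2) * 1 + ‖z‖ * ‖(t : ℂ) - z‖ := by ring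
      _ ≤ (1 + ‖z‖ ^ 2) * (‖(t : ℂ) - z‖ / z.im) + ‖z‖ * ‖(t : ℂ) - z‖ := by
          gcongr; rwa [one_le_div hz]
      _ = _ := by ring
  have hid : ((t : ℂ) - z)⁻¹ - t / (1 + (t : ℂ) ^ 2)
      = (1 + t * z) / ((t - z) * ((1 + t ^ 2 : ℝ) : ℂ)) := by
    rw [← hone] at hone0 ⊢
    field_simp
    ring
  rw [hid, norm_div, norm_mul, norm_real, Real.norm_of_nonneg (by positivity)]
  calc _ ≤ ((1 + ‖z‖ ^ 2) / z.im + ‖z‖) * ‖(t : ℂ) - z‖ / (‖(t : ℂ) - z‖ * (1 + t ^ 2)) := by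
        gcongr
    _ = _ := by field_simp [norm_ne_zero_iff.2 hsub]

section NevanlinnaForm

variable {w : ℝ → ℝ}

lemma integrable_nevanlinnaIntegrand (hw : Measurable w)
    (hw_int : Integrable fun t => w t / (1 + t ^ 2)) {z : ℂ} (hz : 0 < z.im) :
    Integrable fun t : ℝ => (((t : ℂ) - z)⁻¹ - (t : ℂ) / (1 + (t : ℂ) ^ 2)) * ((w t : ℝ) : ℂ) := by
  refine (hw_int.norm.const_mul ((1 + ‖z‖ ^ 2) / z.im + ‖z‖)).mono'
    (by fun_prop : Measurable _).aestronglyMeasurable (Eventually.of_forall fun t => ?_)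
  rw [norm_mul, norm_real, norm_div, Real.norm_of_nonneg (by positivity : (0 : ℝ) ≤ 1 + t ^ 2)]
  calc _ ≤ ((1 + ‖z‖ ^ 2) / z.im + ‖z‖) / (1 + t ^ 2) * ‖w t‖ := by
        gcongr; exact norm_inv_sub_sub_div_le hz t
    _ = _ := by ring

lemma im_nevanlinnaIntegrand (x ε t r : ℝ) :
    ((((t : ℂ) - (x + ε * I))⁻¹ - (t : ℂ) / (1 + (t : ℂ) ^ 2)) * (r : ℂ)).im
      = halfPlanePoissonKernel ε (t - x) * r := by
  have hreal : (t : ℂ) / (1 + (t : ℂ) ^ 2) = ((t / (1 + t ^ 2) : ℝ) : ℂ) := by push_cast; rfl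
  rw [im_mul_ofReal, sub_im, im_inv_ofReal_sub, hreal, ofReal_im, sub_zero]

lemma integrable_halfPlanePoissonKernel_mul (hw : Measurable w)
    (hw_int : Integrable fun t => w t / (1 + t ^ 2)) (x : ℝ) {ε : ℝ} (hε : 0 < ε) :
    Integrable fun t => halfPlanePoissonKernel ε (t - x) * w t := by
  have h := (integrable_nevanlinnaIntegrand hw hw_int (z := x + ε * I) (by simpa using hε)).im
  simpa only [RCLike.im_to_complex, im_nevanlinnaIntegrand] using h

lemma im_integral_nevanlinnaIntegrand (hw : Measurable w)
    (hw_int : Integrable fun t => w t / (1 + t ^ 2)) (x : ℝ) {ε : ℝ} (hε : 0 < ε) :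
    (∫ t : ℝ, (((t : ℂ) - (x + ε * I))⁻¹ - (t : ℂ) / (1 + (t : ℂ) ^ 2)) * ((w t : ℝ) : ℂ)).im
      = ∫ t, halfPlanePoissonKernel ε (t - x) * w t := by
  have h := integral_im (integrable_nevanlinnaIntegrand hw hw_int (z := x + ε * I)
    (by simpa using hε))
  simpa only [RCLike.im_to_complex, im_nevanlinnaIntegrand] using h.symm

lemma integral_halfPlanePoissonKernel_mul_le_im {F : ℂ → ℂ} {a b : ℝ}
    (hF : HasNevanlinnaForm F a b w) (ha : 0 ≤ a) (hw : Measurable w)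
    (hw_int : Integrable fun t => w t / (1 + t ^ 2)) (x : ℝ) {ε : ℝ} (hε : 0 < ε) :
    ∫ t, halfPlanePoissonKernel ε (t - x) * w t ≤ (F (x + ε * I)).im := by
  rw [hF _ (by simpa using hε), add_im, im_integral_nevanlinnaIntegrand hw hw_int x hε,
    le_add_iff_nonneg_left]
  simpa [div_im] using add_nonneg hε.le (div_nonneg (mul_nonneg ha hε.le) (normSq_nonneg _))

end NevanlinnaForm

section PoissonIntegralLowerBounds

variable {w : ℝ → ℝ}

lemma mul_arctan_le_integral_halfPlanePoissonKernel_mul (hw_nonneg : ∀ t, 0 ≤ w t)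
    {x ε r c : ℝ} (hε : 0 < ε) (hr : 0 ≤ r)
    (hint : Integrable fun t => halfPlanePoissonKernel ε (t - x) * w t)
    (hc : ∀ t ∈ Icc (x - r) (x + r), c ≤ w t) :
    2 * c * Real.arctan (r / ε) ≤ ∫ t, halfPlanePoissonKernel ε (t - x) * w t := by
  have hcont : Continuous fun t => halfPlanePoissonKernel ε (t - x) * c :=
    ((continuous_halfPlanePoissonKernel hε).comp (continuous_sub_right x)).mul continuous_const
  calc 2 * c * Real.arctan (r / ε)
      = ∫ t in Icc (x - r) (x + r), halfPlanePoissonKernel ε (t - x) * c := by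
        rw [integral_Icc_eq_integral_Ioc, ← intervalIntegral.integral_of_le (by linarith),
          intervalIntegral.integral_mul_const, integral_halfPlanePoissonKernel_sub hε]
        ring
    _ ≤ ∫ t in Icc (x - r) (x + r), halfPlanePoissonKernel ε (t - x) * w t :=
        setIntegral_mono_on hcont.integrableOn_Icc hint.integrableOn measurableSet_Icc
          fun t ht => mul_le_mul_of_nonneg_left (hc t ht) (halfPlanePoissonKernel_nonneg hε _)
    _ ≤ _ := setIntegral_le_integral hint (Eventually.of_forall fun t =>
        mul_nonneg (halfPlanePoissonKernel_nonneg hε _) (hw_nonneg t))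

lemma mul_log_le_integral_halfPlanePoissonKernel_mul (hw_nonneg : ∀ t, 0 ≤ w t)
    {x ε v c : ℝ} (hε : 0 < ε) (hεv : ε ≤ v) (hc : 0 ≤ c)
    (hint : Integrable fun t => halfPlanePoissonKernel ε (t - x) * w t)
    (hcw : ∀ t ∈ Ioc x (x + v), c * (t - x) ≤ w t) :
    ε * (c / 2 * Real.log (v / ε)) ≤ ∫ t, halfPlanePoissonKernel ε (t - x) * w t := by
  have hcont : ContinuousOn (fun t => ε * c / 2 * (t - x)⁻¹) (Icc (x + ε) (x + v)) :=
    continuousOn_const.mul ((continuous_sub_right x).continuousOn.inv₀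
      fun t ht => by linarith [ht.1])
  calc ε * (c / 2 * Real.log (v / ε))
      = ∫ t in Icc (x + ε) (x + v), ε * c / 2 * (t - x)⁻¹ := by
        rw [integral_Icc_eq_integral_Ioc, ← intervalIntegral.integral_of_le (by linarith),
          intervalIntegral.integral_const_mul, intervalIntegral.integral_comp_sub_right
            (fun t => t⁻¹), add_sub_cancel_left, add_sub_cancel_left,
          integral_inv_of_pos hε (hε.trans_le hεv)]
        ring
    _ ≤ ∫ t in Icc (x + ε) (x + v), halfPlanePoissonKernel ε (t - x) * w t := by
        refine setIntegral_mono_on hcont.integrableOn_Icc hint.integrableOn measurableSet_Icc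
          fun t ⟨hεt, htv⟩ => ?_
        have hs : ε ≤ t - x := by linarith
        have hw : c * (t - x) ≤ w t := hcw t ⟨by linarith, htv⟩
        have hsq : ε ^ 2 ≤ (t - x) ^ 2 := pow_le_pow_left₀ hε.le hs 2
        rw [← div_eq_mul_inv, div_div, halfPlanePoissonKernel, div_mul_eq_mul_div,
          div_le_div_iff₀ (by linarith) (by positivity)]
        nlinarith [mul_le_mul_of_nonneg_left hw (by nlinarith : 0 ≤ 2 * ε * (t - x)),
          mul_le_mul_of_nonneg_left hsq (by positivity : 0 ≤ ε * c)]
    _ ≤ _ := setIntegral_le_integral hint (Eventually.of_forall fun t =>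
        mul_nonneg (halfPlanePoissonKernel_nonneg hε _) (hw_nonneg t))

end PoissonIntegralLowerBounds

section NevanlinnaMeasure

variable {μ : Measure ℝ} [IsFiniteMeasure μ] {a b : ℝ} {w : ℝ → ℝ}

lemma exists_mem_nhds_restrict_absolutelyContinuous (hF : HasNevanlinnaForm (Ftransform μ) a b w)
    (ha : 0 ≤ a) (hw : Measurable w) (hw_nonneg : ∀ t, 0 ≤ w t)
    (hw_int : Integrable fun t => w t / (1 + t ^ 2)) {x₀ c : ℝ} (hc : 0 < c)
    (hcw : ∀ᶠ t in 𝓝 x₀, c ≤ w t) : ∃ u ∈ 𝓝 x₀, μ.restrict u ≪ volume := by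
  obtain ⟨ρ, hρ, hρw⟩ := Metric.eventually_nhds_iff.1 hcw
  set r := ρ / 2 with hr_def
  have hr : 0 < r := half_pos hρ
  have hbound : ∀ᶠ ε in 𝓝[>] 0, ∀ x ∈ Metric.ball x₀ r,
      ∫ t, halfPlanePoissonKernel ε (x - t) ∂μ ≤ (c * π / 2)⁻¹ := by
    filter_upwards [Ioc_mem_nhdsGT hr] with ε ⟨hε, hεr⟩ x hx
    refine integral_halfPlanePoissonKernel_le_of_le_im hε (by positivity) ?_
    have hcIcc : ∀ t ∈ Icc (x - r) (x + r), c ≤ w t := fun t ht => hρw <| by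
      rw [Metric.mem_ball, Real.dist_eq] at hx
      rw [Real.dist_eq, abs_lt]
      constructor <;> linarith [abs_lt.1 hx, ht.1, ht.2, hr_def]
    calc c * π / 2 = 2 * c * Real.arctan 1 := by rw [Real.arctan_one]; ring
      _ ≤ 2 * c * Real.arctan (r / ε) := by
          gcongr
          exact (one_le_div hε).2 hεr
      _ ≤ ∫ t, halfPlanePoissonKernel ε (t - x) * w t :=
          mul_arctan_le_integral_halfPlanePoissonKernel_mul hw_nonneg hε hr.le
            (integrable_halfPlanePoissonKernel_mul hw hw_int x hε) hcIcc
      _ ≤ (Ftransform μ (x + ε * I)).im :=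
          integral_halfPlanePoissonKernel_mul_le_im hF ha hw hw_int x hε
  refine ⟨Metric.ball x₀ r, Metric.ball_mem_nhds x₀ hr,
    absolutelyContinuous_of_forall_isOpen_le (C := ENNReal.ofReal ((c * π / 2)⁻¹ / π))
      ENNReal.ofReal_ne_top fun U hU => ?_⟩
  rw [Measure.restrict_apply hU.measurableSet]
  calc μ (U ∩ Metric.ball x₀ r)
      ≤ ENNReal.ofReal ((c * π / 2)⁻¹ / π) * volume (U ∩ Metric.ball x₀ r) :=
        measure_le_of_integral_halfPlanePoissonKernel_le (hU.inter Metric.isOpen_ball)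
          (hbound.mono fun ε h x hx => h x hx.2)
    _ ≤ _ := by gcongr; exact inter_subset_left

lemma tendsto_im_div_atTop_of_mul_sub_le {F : ℂ → ℂ} (hF : HasNevanlinnaForm F a b w) (ha : 0 ≤ a)
    (hw : Measurable w) (hw_nonneg : ∀ t, 0 ≤ w t)
    (hw_int : Integrable fun t => w t / (1 + t ^ 2)) {x c v : ℝ} (hc : 0 < c) (hv : 0 < v)
    (hcw : ∀ t ∈ Ioc x (x + v), c * (t - x) ≤ w t) :
    Tendsto (fun ε : ℝ => (F (x + ε * I)).im / ε) (𝓝[>] 0) atTop := by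
  have hlog : Tendsto (fun ε => c / 2 * Real.log (v / ε)) (𝓝[>] 0) atTop :=
    (Real.tendsto_log_atTop.comp (tendsto_inv_nhdsGT_zero.const_mul_atTop hv)).const_mul_atTop
      (half_pos hc)
  refine tendsto_atTop_mono' _ ?_ hlog
  filter_upwards [Ioo_mem_nhdsGT hv] with ε ⟨hε, hεv⟩
  rw [le_div_iff₀ hε, mul_comm]
  exact (mul_log_le_integral_halfPlanePoissonKernel_mul hw_nonneg hε hεv.le hc.le
    (integrable_halfPlanePoissonKernel_mul hw hw_int x hε) hcw).trans
    (integral_halfPlanePoissonKernel_mul_le_im hF ha hw hw_int x hε)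

end NevanlinnaMeasure

section Unimodal

variable {k : ℝ → ℝ}

lemma abs_div_one_add_sq_le (t : ℝ) : |t| / (1 + t ^ 2) ≤ min 1 (t ^ 2) / |t| := by
  rcases eq_or_ne t 0 with rfl | ht
  · simp
  rw [div_le_div_iff₀ (by positivity) (abs_pos.2 ht), abs_mul_abs_self]
  rcases le_total 1 (t ^ 2) with h | h
  · rw [min_eq_left h]; linarith
  · rw [min_eq_right h]; nlinarith [sq_nonneg t]

lemma integrable_abs_mul_div_one_add_sq (hk_meas : Measurable k) (hk_nonneg : ∀ t, 0 ≤ k t)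
    (hk_int : Integrable fun t : ℝ => min 1 (t ^ 2) * k t / |t|) :
    Integrable fun t : ℝ => |t| * k t / (1 + t ^ 2) :=
  hk_int.mono' (by fun_prop : Measurable _).aestronglyMeasurable (Eventually.of_forall fun t => by
    rw [Real.norm_of_nonneg (by have := hk_nonneg t; positivity), mul_comm, mul_div_assoc,
      mul_comm (min _ _), mul_div_assoc]
    exact mul_le_mul_of_nonneg_left (abs_div_one_add_sq_le t) (hk_nonneg t))

lemma exists_pos_eventually_le_of_unimodal (hk_nonneg : ∀ t, 0 ≤ k t)
    (hk_mono : MonotoneOn k (Iio 0)) (hk_anti : AntitoneOn k (Ioi 0)) {x u v : ℝ} (hx : x ≠ 0)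
    (hu : u < x) (hv : x < v) (hku : k u ≠ 0) (hkv : k v ≠ 0) :
    ∃ m > 0, ∀ᶠ t in 𝓝 x, m ≤ k t := by
  rcases hx.lt_or_gt with hneg | hpos
  · exact ⟨k u, (hk_nonneg u).lt_of_ne' hku, eventually_of_mem (Ioo_mem_nhds hu hneg)
      fun t ht => hk_mono (hu.trans hneg) ht.2 ht.1.le⟩
  · exact ⟨k v, (hk_nonneg v).lt_of_ne' hkv, eventually_of_mem (Ioo_mem_nhds hpos hv)
      fun t ht => hk_anti ht.1 (hpos.trans hv) ht.2.le⟩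

lemma eventually_le_abs_mul {x m : ℝ} (hx : x ≠ 0) (hm : 0 ≤ m) (hk : ∀ᶠ t in 𝓝 x, m ≤ k t) :
    ∀ᶠ t in 𝓝 x, |x| / 2 * m ≤ |t| * k t := by
  filter_upwards [hk, (continuous_abs.tendsto x).eventually
    (lt_mem_nhds (half_lt_self (abs_pos.2 hx)))] with t hkt hxt
  exact mul_le_mul hxt.le hkt hm (abs_nonneg t)

end Unimodal

theorem boolean_sd_restrict_ac_general (μ : Measure ℝ) [IsProbabilityMeasure μ]
    (a b : ℝ) (ha : 0 ≤ a) (k : ℝ → ℝ) (hk_meas : Measurable k)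
    (hk_nonneg : ∀ t, 0 ≤ k t)
    (hk_mono : MonotoneOn k (Set.Iio 0)) (hk_anti : AntitoneOn k (Set.Ioi 0))
    (hk_int : Integrable (fun t : ℝ => min 1 (t ^ 2) * k t / |t|))
    (hF : ∀ z : ℂ, 0 < z.im →
      Ftransform μ z = z - (b : ℂ) - (a : ℂ) / z +
        ∫ t : ℝ, (((t : ℂ) - z)⁻¹ - (t : ℂ) / (1 + (t : ℂ) ^ 2)) * ((|t| * k t : ℝ) : ℂ)) :
    μ.restrict {x : ℝ |
        sInf ((fun y : ℝ => (y : EReal)) '' {y : ℝ | k y ≠ 0}) < (x : EReal) ∧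
        (x : EReal) < sSup ((fun y : ℝ => (y : EReal)) '' {y : ℝ | k y ≠ 0})}
      ≪ (volume : Measure ℝ) := by
  set T := {x : ℝ | sInf ((fun y : ℝ => (y : EReal)) '' {y : ℝ | k y ≠ 0}) < (x : EReal) ∧
    (x : EReal) < sSup ((fun y : ℝ => (y : EReal)) '' {y : ℝ | k y ≠ 0})}
  have hF' : HasNevanlinnaForm (Ftransform μ) a b fun t => |t| * k t := hF
  have hw : Measurable fun t => |t| * k t := by fun_prop
  have hw_nonneg : ∀ t, 0 ≤ |t| * k t := fun t => mul_nonneg (abs_nonneg t) (hk_nonneg t)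
  have hw_int := integrable_abs_mul_div_one_add_sq hk_meas hk_nonneg hk_int
  have hleft : ∀ x ∈ T, ∃ u < x, k u ≠ 0 := fun x hx => by
    obtain ⟨_, ⟨u, hu, rfl⟩, hux⟩ := sInf_lt_iff.1 hx.1
    exact ⟨u, EReal.coe_lt_coe_iff.1 hux, hu⟩
  have hright : ∀ x ∈ T, ∃ v > x, k v ≠ 0 := fun x hx => by
    obtain ⟨_, ⟨v, hv, rfl⟩, hxv⟩ := lt_sSup_iff.1 hx.2
    exact ⟨v, EReal.coe_lt_coe_iff.1 hxv, hv⟩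
  have hzero : μ (T ∩ {0}) = 0 := by
    by_cases h0 : (0 : ℝ) ∈ T
    · obtain ⟨v, hv, hkv⟩ := hright 0 h0
      refine measure_mono_null inter_subset_right (measure_singleton_eq_zero_of_tendsto
        (tendsto_im_div_atTop_of_mul_sub_le hF' ha hw hw_nonneg hw_int
          ((hk_nonneg v).lt_of_ne' hkv) hv fun t ht => ?_))
      rw [sub_zero, abs_of_pos ht.1, mul_comm]
      exact mul_le_mul_of_nonneg_left (hk_anti ht.1 hv (by linarith [ht.2])) ht.1.le
    · simp [h0]
  have hlocal : μ.restrict (T \ {0}) ≪ volume :=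
    absolutelyContinuous_restrict_of_forall_nhdsWithin fun x hx => by
      obtain ⟨u, hu, hku⟩ := hleft x hx.1
      obtain ⟨v, hv, hkv⟩ := hright x hx.1
      obtain ⟨m, hm, hkm⟩ :=
        exists_pos_eventually_le_of_unimodal hk_nonneg hk_mono hk_anti hx.2 hu hv hku hkv
      obtain ⟨U, hU, hac⟩ := exists_mem_nhds_restrict_absolutelyContinuous hF' ha hw hw_nonneg
        hw_int (mul_pos (half_pos (abs_pos.2 hx.2)) hm) (eventually_le_abs_mul hx.2 hm.le hkm)
      exact ⟨U, mem_nhdsWithin_of_mem_nhds hU, hac⟩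
  rwa [← Measure.restrict_congr_set (sdiff_null_ae_eq_self hzero), sdiff_self_inter]

/-- if `μ` is a probability measure on ℝ whose F-transform admits the
Pick–Nevanlinna representation with Gaussian component `a ≥ 0` and absolutely continuous
Boolean Lévy density data `k` unimodal with mode 0 and not a.e. zero, then with
`α = inf {x : k x ≠ 0}` and `β = sup {x : k x ≠ 0}` (as extended reals), the restriction
of `μ` to the open interval `(α, β)` is Lebesgue absolutely continuous. -/
theorem boolean_sd_restrict_ac (μ : Measure ℝ) [IsProbabilityMeasure μ]
    (a b : ℝ) (ha : 0 ≤ a) (k : ℝ → ℝ) (hk_meas : Measurable k)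
    (hk_nonneg : ∀ t, 0 ≤ k t)
    (hk_mono : MonotoneOn k (Set.Iio 0)) (hk_anti : AntitoneOn k (Set.Ioi 0))
    (hk_ne : ¬ (∀ᵐ t ∂(volume : Measure ℝ), k t = 0))
    (hk_int : Integrable (fun t : ℝ => min 1 (t ^ 2) * k t / |t|))
    (hF : ∀ z : ℂ, 0 < z.im →
      Ftransform μ z = z - (b : ℂ) - (a : ℂ) / z +
        ∫ t : ℝ, (((t : ℂ) - z)⁻¹ - (t : ℂ) / (1 + (t : ℂ) ^ 2)) * ((|t| * k t : ℝ) : ℂ)) :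
    μ.restrict {x : ℝ |
        sInf ((fun y : ℝ => (y : EReal)) '' {y : ℝ | k y ≠ 0}) < (x : EReal) ∧
        (x : EReal) < sSup ((fun y : ℝ => (y : EReal)) '' {y : ℝ | k y ≠ 0})}
      ≪ (volume : Measure ℝ) :=
  boolean_sd_restrict_ac_general μ a b ha k hk_meas hk_nonneg hk_mono hk_anti hk_int hF
end

section
/- Let μ be a probability measure on ℝ, b ∈ ℝ and τ a finite positive Borel measure on ℝ such that F_μ(z) = z − b − ∫_ℝ (1+tz)/(z−t) dτ(t) for all z ∈ ℂ⁺. Suppose there exists an at most countable subset C of ℝ such that: (1) 0 ∈ C; (2) for every x ∈ ℝ∖C the limit lim_{ε→0⁺} Im[F_μ(x+iε)] exists and belongs to [0,∞); (3) for every x ∈ C∖{0}, lim_{ε→0⁺} ε·F_μ(x+iε) = 0. Then the restriction of τ to ℝ∖{0} is absolutely continuous with respect to Lebesgue measure; equivalently, the Boolean Lévy measure ν(dt) = ((1+t²)/t²)·1_{t≠0}(t) τ(dt) of μ is Lebesgue absolutely continuous. -/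
open MeasureTheory Complex Set Filter

/-! Writing `z = x + iε`, the representation gives
`Im F_μ(z) = ε + ∫ ε (1 + t²) / ((x - t)² + ε²) dτ(t)`. The kernel is at least `1 / (2ε)` on the
ball `B(x, ε)` and equals `(1 + x²) / ε` at `t = x`, so `τ(B(x, ε)) ≤ 2ε Im F_μ(x + iε)` and
`(1 + x²) τ{x} ≤ ε Im F_μ(x + iε)`. Off `C` the first bound gives `τ(B(x, ε)) = O(|B(x, ε)|)`,
which by Besicovitch differentiation kills the singular part of `τ` on `ℝ \ C`; on `C \ {0}` the
second bound and condition (3) kill the atoms, and a countable set without atoms is `τ`-null. -/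

open scoped NNReal Topology

section Besicovitch

variable {α : Type*} [MetricSpace α] [MeasurableSpace α] [BorelSpace α]
  [SecondCountableTopology α] [HasBesicovitchCovering α]
  {ρ μ : Measure α} [SigmaFinite ρ] [IsLocallyFiniteMeasure μ]

theorem singularPart_null_of_eventually_closedBall_le_mul {s : Set α} {c : ℝ≥0}
    (h : ∀ x ∈ s, ∀ᶠ r in 𝓝[>] 0, ρ (Metric.closedBall x r) ≤ c * μ (Metric.closedBall x r)) :
    ρ.singularPart μ s = 0 := by
  set σ := ρ.singularPart μ
  -- `σ` is carried by a `μ`-null set, and differentiating `σ` along its own Besicovitch family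
  -- bounds it by `c • μ` away from that set.
  obtain ⟨T, -, hσT, hμT⟩ := ρ.mutuallySingular_singularPart μ
  have hle : σ (s ∩ Tᶜ) ≤ (c • μ) (s ∩ Tᶜ) := by
    refine VitaliFamily.measure_le_of_frequently_le (Besicovitch.vitaliFamily σ) _
      Measure.AbsolutelyContinuous.rfl _ fun x hx => ?_
    refine (Besicovitch.tendsto_filterAt σ x).frequently (Eventually.frequently ?_)
    filter_upwards [h x hx.1] with r hr
    exact (Measure.singularPart_le ρ μ _).trans hr
  have hsT : σ (s ∩ Tᶜ) = 0 := by
    refine le_antisymm (hle.trans_eq ?_) zero_le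
    simp [measure_mono_null inter_subset_right hμT]
  refine le_antisymm ?_ zero_le
  calc σ s ≤ σ (s ∩ Tᶜ) + σ (s \ Tᶜ) := measure_le_inter_add_sdiff σ s Tᶜ
    _ = 0 := by rw [hsT, measure_mono_null (fun x hx => not_not.1 hx.2) hσT, add_zero]

theorem singularPart_null_of_eventually_closedBall_le {s : Set α}
    (h : ∀ x ∈ s, ∃ c : ℝ≥0,
      ∀ᶠ r in 𝓝[>] 0, ρ (Metric.closedBall x r) ≤ c * μ (Metric.closedBall x r)) :
    ρ.singularPart μ s = 0 := by
  choose c hc using h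
  have hcover : s ⊆ ⋃ n : ℕ, {x | ∃ hx : x ∈ s, c x hx ≤ n} := fun x hx =>
    mem_iUnion.2 ⟨⌈c x hx⌉₊, hx, Nat.le_ceil _⟩
  refine measure_mono_null hcover (measure_iUnion_null fun n => ?_)
  refine singularPart_null_of_eventually_closedBall_le_mul (c := n) fun x ⟨hx, hcn⟩ => ?_
  filter_upwards [hc x hx] with r hr
  exact hr.trans (by gcongr)

end Besicovitch

theorem mul_measureReal_le_integral_of_le {α : Type*} [MeasurableSpace α] {μ : Measure α}
    [IsFiniteMeasure μ] {f : α → ℝ} {s : Set α} {c : ℝ} (hc : 0 ≤ c) (hf0 : 0 ≤ f)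
    (hf : Integrable f μ) (hs : ∀ x ∈ s, c ≤ f x) : c * μ.real s ≤ ∫ x, f x ∂μ :=
  calc c * μ.real s ≤ c * μ.real {x | c ≤ f x} :=
      mul_le_mul_of_nonneg_left (measureReal_mono hs) hc
    _ ≤ ∫ x, f x ∂μ := mul_meas_ge_le_integral_of_nonneg (ae_of_all _ hf0) hf c

theorem norm_inv_sub_ofReal_le {z : ℂ} (hz : 0 < z.im) (t : ℝ) : ‖(z - t)⁻¹‖ ≤ z.im⁻¹ := by
  rw [norm_inv]
  refine inv_anti₀ hz ?_
  simpa using abs_im_le_norm (z - t) |>.trans' (le_abs_self _)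

theorem integrable_booleanKernel (τ : Measure ℝ) [IsFiniteMeasure τ] {z : ℂ} (hz : 0 < z.im) :
    Integrable (fun t : ℝ => (1 + t * z) / (z - t)) τ := by
  have hne : ∀ t : ℝ, z - t ≠ 0 := fun t h => hz.ne' (by simpa using congrArg im h)
  have hcont : Continuous fun t : ℝ => (1 + t * z) / (z - t) := by fun_prop (disch := exact hne)
  refine .of_bound hcont.aestronglyMeasurable (‖z‖ + ‖1 + z ^ 2‖ * z.im⁻¹) (ae_of_all _ fun t => ?_)
  have hsplit : (1 + t * z) / (z - t) = -z + (1 + z ^ 2) * (z - t)⁻¹ := by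
    field_simp [hne t]; ring
  rw [hsplit]
  refine (norm_add_le _ _).trans ?_
  rw [norm_neg, norm_mul]
  gcongr
  exact norm_inv_sub_ofReal_le hz t

theorem im_booleanKernel (x ε t : ℝ) :
    ((1 + t * (x + ε * I)) / (x + ε * I - t)).im = -(ε * (1 + t ^ 2) / ((x - t) ^ 2 + ε ^ 2)) := by
  rw [div_im]
  simp [normSq_apply]
  ring

theorem integrable_weightedPoissonKernel (τ : Measure ℝ) [IsFiniteMeasure τ] {x ε : ℝ}
    (hε : 0 < ε) :
    Integrable (fun t => ε * (1 + t ^ 2) / ((x - t) ^ 2 + ε ^ 2)) τ := by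
  have h := (integrable_booleanKernel τ (z := x + ε * I) (by simpa using hε)).im.neg
  simpa [im_booleanKernel] using h

def IsBooleanGeneratingPair (μ : Measure ℝ) (b : ℝ) (τ : Measure ℝ) : Prop :=
  ∀ z : ℂ, 0 < z.im → Ftransform μ z = z - b - ∫ t : ℝ, (1 + t * z) / (z - t) ∂τ

section

variable {μ τ : Measure ℝ} [IsFiniteMeasure τ] {b x ε : ℝ}

theorem im_Ftransform_eq
    (hF : IsBooleanGeneratingPair μ b τ)
    (hε : 0 < ε) :
    (Ftransform μ (x + ε * I)).im = ε + ∫ t, ε * (1 + t ^ 2) / ((x - t) ^ 2 + ε ^ 2) ∂τ := by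
  have hz : 0 < (x + ε * I : ℂ).im := by simpa using hε
  have := integral_im (integrable_booleanKernel τ hz)
  simp only [RCLike.im_to_complex] at this
  rw [hF _ hz, sub_im, sub_im, ← this]
  simp [im_booleanKernel, integral_neg]

theorem measureReal_closedBall_le_im_Ftransform
    (hF : IsBooleanGeneratingPair μ b τ)
    (hε : 0 < ε) :
    τ.real (Metric.closedBall x ε) ≤ 2 * ε * (Ftransform μ (x + ε * I)).im := by
  have hkernel : ∀ t ∈ Metric.closedBall x ε,
      (2 * ε)⁻¹ ≤ ε * (1 + t ^ 2) / ((x - t) ^ 2 + ε ^ 2) := by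
    intro t ht
    rw [Metric.mem_closedBall, Real.dist_eq, abs_sub_comm] at ht
    have : (x - t) ^ 2 ≤ ε ^ 2 := sq_le_sq' (abs_le.1 ht).1 (abs_le.1 ht).2
    rw [inv_eq_one_div, div_le_div_iff₀ (by positivity) (by positivity)]
    nlinarith [sq_nonneg t]
  have := mul_measureReal_le_integral_of_le (by positivity)
    (fun t => by positivity) (integrable_weightedPoissonKernel τ hε) hkernel
  rw [im_Ftransform_eq hF hε]
  calc τ.real (Metric.closedBall x ε)
      = 2 * ε * ((2 * ε)⁻¹ * τ.real (Metric.closedBall x ε)) := by field_simp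
    _ ≤ 2 * ε * (ε + ∫ t, ε * (1 + t ^ 2) / ((x - t) ^ 2 + ε ^ 2) ∂τ) := by
      gcongr; exact this.trans (le_add_of_nonneg_left hε.le)

theorem mul_measureReal_singleton_le_mul_im_Ftransform
    (hF : IsBooleanGeneratingPair μ b τ)
    (hε : 0 < ε) :
    (1 + x ^ 2) * τ.real {x} ≤ ε * (Ftransform μ (x + ε * I)).im := by
  have hkernel : ∀ t ∈ ({x} : Set ℝ),
      (1 + x ^ 2) / ε ≤ ε * (1 + t ^ 2) / ((x - t) ^ 2 + ε ^ 2) := by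
    rintro t rfl
    rw [sub_self, div_le_div_iff₀ hε (by positivity)]
    exact (by ring : _ = _).le
  have := mul_measureReal_le_integral_of_le (by positivity)
    (fun t => by positivity) (integrable_weightedPoissonKernel τ hε) hkernel
  rw [im_Ftransform_eq hF hε]
  calc (1 + x ^ 2) * τ.real {x} = ε * ((1 + x ^ 2) / ε * τ.real {x}) := by field_simp
    _ ≤ ε * (ε + ∫ t, ε * (1 + t ^ 2) / ((x - t) ^ 2 + ε ^ 2) ∂τ) := by
      gcongr; exact this.trans (le_add_of_nonneg_left hε.le)

theorem measure_singleton_eq_zero_of_tendsto_mul_Ftransform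
    (hF : IsBooleanGeneratingPair μ b τ)
    (h : Tendsto (fun ε : ℝ => (ε : ℂ) * Ftransform μ (x + ε * I)) (𝓝[>] 0) (𝓝 0)) :
    τ {x} = 0 := by
  have him : Tendsto (fun ε : ℝ => ε * (Ftransform μ (x + ε * I)).im) (𝓝[>] 0) (𝓝 0) := by
    simpa [Function.comp_def, mul_im] using (continuous_im.tendsto 0).comp h
  have hle : (1 + x ^ 2) * τ.real {x} ≤ 0 := ge_of_tendsto him <|
    eventually_mem_nhdsWithin.mono fun ε hε => mul_measureReal_singleton_le_mul_im_Ftransform hF hε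
  have hx : τ.real {x} = 0 :=
    le_antisymm (nonpos_of_mul_nonpos_right hle (by positivity)) measureReal_nonneg
  exact (measureReal_eq_zero_iff (measure_ne_top τ _)).1 hx

theorem exists_eventually_measure_closedBall_le_of_tendsto_im_Ftransform
    (hF : IsBooleanGeneratingPair μ b τ)
    {L : ℝ} (h : Tendsto (fun ε : ℝ => (Ftransform μ (x + ε * I)).im) (𝓝[>] 0) (𝓝 L)) :
    ∃ c : ℝ≥0, ∀ᶠ r in 𝓝[>] 0,
      τ (Metric.closedBall x r) ≤ c * volume (Metric.closedBall x r) := by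
  refine ⟨(L + 1).toNNReal, ?_⟩
  filter_upwards [h.eventually (eventually_le_nhds (lt_add_one L)), self_mem_nhdsWithin]
    with r hr hr0
  have hr0 : 0 < r := hr0
  rw [Real.volume_closedBall, ← ofReal_measureReal, ENNReal.ofNNReal_toNNReal,
    ← ENNReal.ofReal_mul' (by positivity)]
  refine ENNReal.ofReal_le_ofReal ((measureReal_closedBall_le_im_Ftransform hF hr0).trans ?_)
  nlinarith

end

theorem boolean_levy_measure_ac_general (μ : Measure ℝ)
    (b : ℝ) (τ : Measure ℝ) [IsFiniteMeasure τ]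
    (hF : ∀ z : ℂ, 0 < z.im →
      Ftransform μ z = z - (b : ℂ) -
        ∫ t : ℝ, (1 + (t : ℂ) * z) / (z - (t : ℂ)) ∂τ)
    (C : Set ℝ) (hC_count : C.Countable)
    (h2 : ∀ x : ℝ, x ∉ C → ∃ L : ℝ, 0 ≤ L ∧
      Tendsto (fun ε : ℝ => (Ftransform μ ((x : ℂ) + (ε : ℂ) * I)).im)
        (nhdsWithin 0 (Set.Ioi 0)) (nhds L))
    (h3 : ∀ x : ℝ, x ∈ C → x ≠ 0 →
      Tendsto (fun ε : ℝ => (ε : ℂ) * Ftransform μ ((x : ℂ) + (ε : ℂ) * I))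
        (nhdsWithin 0 (Set.Ioi 0)) (nhds 0)) :
    τ.restrict {(0 : ℝ)}ᶜ ≪ (volume : Measure ℝ) := by
  have hCc : τ.singularPart volume Cᶜ = 0 :=
    singularPart_null_of_eventually_closedBall_le fun x hx =>
      let ⟨_, _, hL⟩ := h2 x hx
      exists_eventually_measure_closedBall_le_of_tendsto_im_Ftransform hF hL
  have hC : τ (C \ {0}) = 0 := by
    rw [← biUnion_of_singleton (C \ {0}), measure_biUnion_null_iff (hC_count.mono sdiff_subset)]
    exact fun x hx => measure_singleton_eq_zero_of_tendsto_mul_Ftransform hF (h3 x hx.1 hx.2)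
  have hsing : τ.singularPart volume {0}ᶜ = 0 := by
    refine measure_mono_null (fun x hx => ?_) (measure_union_null hCc
      (Measure.absolutelyContinuous_of_le (Measure.singularPart_le τ volume) hC))
    by_cases hxC : x ∈ C
    exacts [Or.inr ⟨hxC, hx⟩, Or.inl hxC]
  rw [← Measure.singularPart_eq_zero,
    Measure.singularPart_restrict _ _ (measurableSet_singleton 0).compl, Measure.restrict_eq_zero]
  exact hsing

/-- let `μ` be a probability measure with Boolean generating pair `(b, τ)`.
Suppose there is an at most countable set `C ∋ 0` such that the boundary values
`lim_{ε→0⁺} Im F_μ(x+iε)` exist and are finite nonnegative for every `x ∉ C`, and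
`lim_{ε→0⁺} ε F_μ(x+iε) = 0` for every `x ∈ C \ {0}`. Then `τ` restricted to `ℝ \ {0}`
is Lebesgue absolutely continuous (equivalently, the Boolean Lévy measure of `μ` is). -/
theorem boolean_levy_measure_ac (μ : Measure ℝ) [IsProbabilityMeasure μ]
    (b : ℝ) (τ : Measure ℝ) [IsFiniteMeasure τ]
    (hF : ∀ z : ℂ, 0 < z.im →
      Ftransform μ z = z - (b : ℂ) -
        ∫ t : ℝ, (1 + (t : ℂ) * z) / (z - (t : ℂ)) ∂τ)
    (C : Set ℝ) (hC_count : C.Countable) (hC0 : (0 : ℝ) ∈ C)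
    (h2 : ∀ x : ℝ, x ∉ C → ∃ L : ℝ, 0 ≤ L ∧
      Tendsto (fun ε : ℝ => (Ftransform μ ((x : ℂ) + (ε : ℂ) * I)).im)
        (nhdsWithin 0 (Set.Ioi 0)) (nhds L))
    (h3 : ∀ x : ℝ, x ∈ C → x ≠ 0 →
      Tendsto (fun ε : ℝ => (ε : ℂ) * Ftransform μ ((x : ℂ) + (ε : ℂ) * I))
        (nhdsWithin 0 (Set.Ioi 0)) (nhds 0)) :
    τ.restrict {(0 : ℝ)}ᶜ ≪ (volume : Measure ℝ) :=
  boolean_levy_measure_ac_general μ b τ hF C hC_count h2 h3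
end

section
/- For m ∈ ℝ, consider the function k_m : ℝ∖{0} → ℝ defined by k_m(x) = (arctan(x−m) + π/2)/|x|. Then k_m is nondecreasing on (−∞,0) and nonincreasing on (0,∞) (i.e., unimodal with mode 0) if and only if m ≤ π/2. -/
/-!
Write `ℓ t = arctan t + π / 2 > 0`. On `(-∞, 0)` both `ℓ (x - m)` and `1 / |x|` are positive and
increasing, so `k_m` increases there whatever `m` is. On `(0, ∞)` the derivative of
`ℓ (x - m) / x` has the sign of `x - ℓ (x - m) (1 + (x - m) ^ 2)`. The function
`ψ t = ℓ t (1 + t ^ 2) - t` has derivative `2 t ℓ t`, so its minimum is `ψ 0 = π / 2`; with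
`t = x - m` this makes the derivative nonpositive when `m ≤ π / 2`, while at `x = m` the
derivative is `(m - π / 2) / m ^ 2`.
-/

open Real Set

theorem antitoneOn_iff_hasDerivAt_nonpos {s : Set ℝ} (hs : IsOpen s) (hconv : Convex ℝ s)
    {f f' : ℝ → ℝ} (hf : ∀ x ∈ s, HasDerivAt f (f' x) x) :
    AntitoneOn f s ↔ ∀ x ∈ s, f' x ≤ 0 := by
  refine ⟨fun h x hx ↦ (hf x hx).hasDerivWithinAt.nonpos_of_antitoneOn (hs.preperfect x hx) h,
    fun h ↦ antitoneOn_of_hasDerivWithinAt_nonpos hconv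
      (fun x hx ↦ (hf x hx).continuousAt.continuousWithinAt) (fun x hx ↦ ?_)
      (fun x hx ↦ h x (interior_subset hx))⟩
  rw [hs.interior_eq] at hx ⊢
  exact (hf x hx).hasDerivWithinAt

namespace Real

lemma arctan_add_pi_div_two_pos (t : ℝ) : 0 < arctan t + π / 2 := by
  linarith [neg_pi_div_two_lt_arctan t]

lemma hasDerivAt_arctan_add_pi_div_two_mul_one_add_sq_sub (t : ℝ) :
    HasDerivAt (fun t ↦ (arctan t + π / 2) * (1 + t ^ 2) - t) (2 * t * (arctan t + π / 2)) t := by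
  have h := (((hasDerivAt_arctan t).add_const (π / 2)).mul
    ((hasDerivAt_pow 2 t).const_add 1)).sub (hasDerivAt_id t)
  refine h.congr_deriv ?_
  field_simp
  ring

lemma add_pi_div_two_le_arctan_add_pi_div_two_mul (t : ℝ) :
    t + π / 2 ≤ (arctan t + π / 2) * (1 + t ^ 2) := by
  have hψ := hasDerivAt_arctan_add_pi_div_two_mul_one_add_sq_sub
  have hmin : IsMinOn (fun t ↦ (arctan t + π / 2) * (1 + t ^ 2) - t) univ 0 :=
    isMinOn_univ_of_deriv (hψ 0).continuousAt
      (fun x _ ↦ (hψ x).differentiableAt.differentiableWithinAt)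
      (fun x _ ↦ (hψ x).differentiableAt.differentiableWithinAt)
      (fun x (hx : x < 0) ↦ (hψ x).deriv ▸
        mul_nonpos_of_nonpos_of_nonneg (by linarith) (arctan_add_pi_div_two_pos x).le)
      (fun x (hx : 0 < x) ↦ (hψ x).deriv ▸
        mul_nonneg (by linarith) (arctan_add_pi_div_two_pos x).le)
  have hψt := isMinOn_univ_iff.1 hmin t
  rw [arctan_zero] at hψt
  linarith

lemma hasDerivAt_arctan_sub_add_pi_div_two_div (m : ℝ) {x : ℝ} (hx : x ≠ 0) :
    HasDerivAt (fun x ↦ (arctan (x - m) + π / 2) / x)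
      ((x / (1 + (x - m) ^ 2) - (arctan (x - m) + π / 2)) / x ^ 2) x := by
  have h := ((((hasDerivAt_arctan (x - m)).comp x ((hasDerivAt_id x).sub_const m)).add_const
    (π / 2)).div (hasDerivAt_id x) hx)
  refine h.congr_deriv ?_
  simp only [id, Function.comp_apply]
  ring

lemma antitoneOn_arctan_sub_add_pi_div_two_div_iff (m : ℝ) :
    AntitoneOn (fun x ↦ (arctan (x - m) + π / 2) / x) (Ioi 0) ↔ m ≤ π / 2 := by
  rw [antitoneOn_iff_hasDerivAt_nonpos isOpen_Ioi (convex_Ioi 0)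
    fun x hx ↦ hasDerivAt_arctan_sub_add_pi_div_two_div m (ne_of_gt hx)]
  have hsign : ∀ x : ℝ, 0 < x →
      ((x / (1 + (x - m) ^ 2) - (arctan (x - m) + π / 2)) / x ^ 2 ≤ 0 ↔
        x ≤ (arctan (x - m) + π / 2) * (1 + (x - m) ^ 2)) := fun x hx ↦ by
    rw [div_le_iff₀ (by positivity), zero_mul, sub_nonpos, div_le_iff₀ (by positivity)]
  constructor
  · intro h
    by_contra! hm
    have hm0 : 0 < m := pi_div_two_pos.trans hm
    have hm' := (hsign m hm0).1 (h m hm0)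
    rw [sub_self, arctan_zero] at hm'
    linarith
  · intro hm x hx
    rw [hsign x hx]
    linarith [add_pi_div_two_le_arctan_add_pi_div_two_mul (x - m)]

lemma monotoneOn_arctan_sub_add_pi_div_two_div_abs_Iio (m : ℝ) :
    MonotoneOn (fun x ↦ (arctan (x - m) + π / 2) / |x|) (Iio 0) := by
  intro a (ha : a < 0) b (hb : b < 0) hab
  exact div_le_div₀ (arctan_add_pi_div_two_pos _).le (by gcongr) (abs_pos.2 hb.ne)
    (by rw [abs_of_neg ha, abs_of_neg hb]; linarith)

end Real

/-- the function `k_m(x) = (arctan(x-m) + π/2)/|x|` is unimodal with mode 0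
(nondecreasing on `(-∞,0)` and nonincreasing on `(0,∞)`) if and only if `m ≤ π/2`. -/
theorem arctan_shift_unimodal_iff (m : ℝ) :
    (MonotoneOn (fun x : ℝ => (Real.arctan (x - m) + Real.pi / 2) / |x|) (Set.Iio 0) ∧
      AntitoneOn (fun x : ℝ => (Real.arctan (x - m) + Real.pi / 2) / |x|) (Set.Ioi 0))
      ↔ m ≤ Real.pi / 2 := by
  have hEq : EqOn (fun x : ℝ ↦ (arctan (x - m) + π / 2) / x)
      (fun x ↦ (arctan (x - m) + π / 2) / |x|) (Ioi 0) := fun x hx ↦ by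
    simp only [abs_of_pos (mem_Ioi.1 hx)]
  rw [← hEq.congr_antitoneOn, antitoneOn_arctan_sub_add_pi_div_two_div_iff]
  exact and_iff_right (monotoneOn_arctan_sub_add_pi_div_two_div_abs_Iio m)
end

section
/- Let G be the Cauchy transform of the standard normal distribution N(0,1), i.e., G(z) = ∫_ℝ 1/(z−x) dN(0,1)(x) for z ∈ ℂ⁺. Then G is holomorphic on ℂ⁺ and satisfies the differential equation G′(z) = 1 − z·G(z) for all z ∈ ℂ⁺. -/
/-!
Differentiating under the integral sign gives `G'(z) = -∫ (z - x)⁻² dN(x)`. Gaussian integration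
by parts, `∫ x f(x) dN(x) = ∫ f'(x) dN(x)`, applied to `f(x) = (z - x)⁻¹` turns this into
`-∫ x (z - x)⁻¹ dN(x)`, and `x (z - x)⁻¹ = z (z - x)⁻¹ - 1` makes it `1 - z G(z)`.
-/

open MeasureTheory Complex ProbabilityTheory

open scoped NNReal

section GaussianIntegrationByParts

variable {E : Type*} [NormedAddCommGroup E] [NormedSpace ℝ E] {μ : ℝ} {v : ℝ≥0}

lemma hasDerivAt_gaussianPDFReal (μ : ℝ) (v : ℝ≥0) (x : ℝ) :
    HasDerivAt (gaussianPDFReal μ v) (-((x - μ) / v) * gaussianPDFReal μ v x) x := by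
  have hexponent : HasDerivAt (fun y ↦ -(y - μ) ^ 2 / (2 * v)) (-((x - μ) / v)) x :=
    ((((hasDerivAt_id x).sub_const μ).pow 2).neg.div_const (2 * v : ℝ)).congr_deriv
      (by simp only [id]; ring)
  have h := hexponent.exp.const_mul (√(2 * Real.pi * v))⁻¹
  rw [← gaussianPDFReal_def] at h
  exact h.congr_deriv (by rw [gaussianPDFReal]; ring)

lemma integrable_gaussianReal_iff (hv : v ≠ 0) {g : ℝ → E} :
    Integrable g (gaussianReal μ v) ↔ Integrable (fun x ↦ gaussianPDFReal μ v x • g x) := by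
  simp only [gaussianReal_of_var_ne_zero _ hv, ← toReal_gaussianPDF]
  exact integrable_withDensity_iff_integrable_smul' (measurable_gaussianPDF μ v)
    (ae_of_all _ fun _ ↦ gaussianPDF_lt_top)

/-- Stein's lemma: since the density satisfies `p' = -((x - μ) / v) p`, this is `∫ (p • f)' = 0`. -/
theorem integral_sub_smul_gaussianReal [CompleteSpace E] (hv : v ≠ 0) {f f' : ℝ → E}
    (hf : ∀ x, HasDerivAt f (f' x) x) (hf_int : Integrable f (gaussianReal μ v))
    (hf'_int : Integrable f' (gaussianReal μ v))
    (hxf_int : Integrable (fun x ↦ (x - μ) • f x) (gaussianReal μ v)) :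
    ∫ x, (x - μ) • f x ∂gaussianReal μ v = (v : ℝ) • ∫ x, f' x ∂gaussianReal μ v := by
  rw [integrable_gaussianReal_iff hv] at hf_int hf'_int hxf_int
  rw [integral_gaussianReal_eq_integral_smul hv, integral_gaussianReal_eq_integral_smul hv]
  have hp'_smul : ∀ x, (-((x - μ) / v) * gaussianPDFReal μ v x) • f x
      = -(v : ℝ)⁻¹ • gaussianPDFReal μ v x • (x - μ) • f x := fun x ↦ by
    simp only [smul_smul]; ring_nf
  have hvxf_int : Integrable fun x ↦ -(v : ℝ)⁻¹ • gaussianPDFReal μ v x • (x - μ) • f x :=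
    hxf_int.smul _
  have hparts : ∫ x, (-(v : ℝ)⁻¹ • gaussianPDFReal μ v x • (x - μ) • f x
      + gaussianPDFReal μ v x • f' x) = 0 :=
    integral_eq_zero_of_hasDerivAt_of_integrable
      (fun x ↦ ((hasDerivAt_gaussianPDFReal μ v x).smul (hf x)).congr_deriv
        (by rw [add_comm, hp'_smul]))
      (hvxf_int.add hf'_int) hf_int
  rw [integral_add hvxf_int hf'_int, integral_smul, neg_smul, neg_add_eq_zero] at hparts
  rw [← hparts, smul_smul, mul_inv_cancel₀ (NNReal.coe_ne_zero.mpr hv), one_smul]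

end GaussianIntegrationByParts

section CauchyTransform

variable {z : ℂ}

lemma sub_ofReal_ne_zero (hz : z.im ≠ 0) (x : ℝ) : z - x ≠ 0 := by
  intro h
  exact hz (by simpa using congrArg im h)

lemma norm_inv_sub_ofReal_pow_le (hz : z.im ≠ 0) (x : ℝ) (n : ℕ) :
    ‖((z - x) ^ n)⁻¹‖ ≤ |z.im|⁻¹ ^ n := by
  rw [norm_inv, norm_pow, ← inv_pow]
  gcongr
  simpa using abs_im_le_norm (z - x)

lemma integrable_inv_sub_ofReal_pow (μ : Measure ℝ) [IsFiniteMeasure μ] (hz : z.im ≠ 0) (n : ℕ) :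
    Integrable (fun x : ℝ ↦ ((z - x) ^ n)⁻¹) μ :=
  Integrable.mono' (integrable_const _) (by fun_prop)
    (ae_of_all _ fun x ↦ norm_inv_sub_ofReal_pow_le hz x n)

theorem hasDerivAt_cauchyTransform (μ : Measure ℝ) [IsFiniteMeasure μ] (hz : z.im ≠ 0) :
    HasDerivAt (cauchyTransform μ) (-∫ x, ((z - x) ^ 2)⁻¹ ∂μ) z := by
  set s := {w : ℂ | |z.im| / 2 < |w.im|}
  have hs : s ∈ nhds z :=
    (isOpen_lt continuous_const (continuous_abs.comp continuous_im)).mem_nhds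
      (half_lt_self (abs_pos.mpr hz))
  have him : ∀ w ∈ s, w.im ≠ 0 := fun w hw ↦
    abs_pos.mp ((half_pos (abs_pos.mpr hz)).trans hw)
  have hbound : ∀ x : ℝ, ∀ w ∈ s, ‖-((w - x) ^ 2)⁻¹‖ ≤ (|z.im| / 2)⁻¹ ^ 2 := fun x w hw ↦ by
    rw [norm_neg]
    refine (norm_inv_sub_ofReal_pow_le (him w hw) x 2).trans ?_
    gcongr
    exact hw.le
  have hderiv : ∀ x : ℝ, ∀ w ∈ s,
      HasDerivAt (fun w : ℂ ↦ (w - x)⁻¹) (-((w - x) ^ 2)⁻¹) w := fun x w hw ↦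
    (((hasDerivAt_id w).sub_const (x : ℂ)).inv (sub_ofReal_ne_zero (him w hw) x)).congr_deriv
      (by rw [neg_div, one_div, id])
  have h := hasDerivAt_integral_of_dominated_loc_of_deriv_le (μ := μ) hs
    (Filter.Eventually.of_forall fun w ↦ (by fun_prop))
    (by simpa using integrable_inv_sub_ofReal_pow μ hz 1)
    (by fun_prop) (ae_of_all _ hbound) (integrable_const _) (ae_of_all _ hderiv)
  rw [← integral_neg]
  exact h.2

end CauchyTransform

/-- the Cauchy transform `G` of the standard normal distribution `N(0,1)`
is holomorphic on the upper half-plane and satisfies `G'(z) = 1 - z G(z)` there. -/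
theorem gaussian_cauchyTransform_ode :
    ∀ z : ℂ, 0 < z.im →
      HasDerivAt (cauchyTransform (gaussianReal 0 1))
        (1 - z * cauchyTransform (gaussianReal 0 1) z) z := by
  intro z hz
  have hz0 : z.im ≠ 0 := hz.ne'
  have hinv : Integrable (fun x : ℝ ↦ (z - x)⁻¹) (gaussianReal 0 1) := by
    simpa using integrable_inv_sub_ofReal_pow (gaussianReal 0 1) hz0 1
  have hderiv (x : ℝ) : HasDerivAt (fun t : ℝ ↦ (z - t)⁻¹) ((z - x) ^ 2)⁻¹ x :=
    (((hasDerivAt_id (x : ℂ)).const_sub z).inv (sub_ofReal_ne_zero hz0 x)).comp_ofReal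
      |>.congr_deriv (by simp)
  have hsmul_eq (x : ℝ) : (x - 0) • (z - x)⁻¹ = z * (z - x)⁻¹ - 1 := by
    have := sub_ofReal_ne_zero hz0 x
    rw [sub_zero, real_smul]
    field_simp
    ring
  have hstein := integral_sub_smul_gaussianReal one_ne_zero hderiv hinv
    (integrable_inv_sub_ofReal_pow _ hz0 2)
    (by simp only [hsmul_eq]; exact (hinv.const_mul z).sub (integrable_const 1))
  simp only [hsmul_eq, NNReal.coe_one, one_smul] at hstein
  refine (hasDerivAt_cauchyTransform _ hz0).congr_deriv ?_
  rw [← hstein, integral_sub (hinv.const_mul z) (integrable_const 1), integral_const_mul]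
  simp [cauchyTransform]
end

section
/- For every x > 0, the following two-sided inequality holds: (1/2)·( e^{x²}/x − √( (e^{x²}/x)² − π ) ) ≤ h(x) ≤ (1/2)·( e^{x²}/x + √( (e^{x²}/x)² − π ) ), where h(x) = ∫₀^x e^{t²} dt. (Note that (e^{x²}/x)² ≥ 2e > π for all x > 0, so the square roots are real.) -/
/-!
Write `h x = ∫₀^x e^{t²} dt` and `a = e^{x²}/x`. The claim says that `h x` lies between the roots
of `y² - a y + π/4`, i.e. that `x · h x · (a - h x) = e^{x²} h x - x (h x)² ≥ π x / 4`.
Both sides vanish at `0`, and the derivative of the left minus the right is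
`e^{2x²} - (h x)² - π/4`. That is positive: it equals `1 - π/4` at `0`, and its own derivative
`2 e^{x²} (2 x e^{x²} - h x)` is nonnegative because `h x ≤ x e^{x²}`.
-/

open Real

lemma le_of_hasDerivAt_of_nonneg {f f' : ℝ → ℝ} {a x : ℝ} (hf : ∀ y, HasDerivAt f (f' y) y)
    (hf' : ∀ y, a < y → 0 ≤ f' y) (hx : a ≤ x) : f a ≤ f x := by
  refine monotoneOn_of_hasDerivWithinAt_nonneg (convex_Ici a)
    (fun y _ ↦ (hf y).continuousAt.continuousWithinAt) (fun y _ ↦ (hf y).hasDerivWithinAt)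
    (fun y hy ↦ hf' y ?_) Set.self_mem_Ici hx hx
  rwa [interior_Ici] at hy

lemma bounds_of_div_four_le_mul_sub {a c y : ℝ} (hy : c / 4 ≤ y * (a - y)) :
    1 / 2 * (a - √(a ^ 2 - c)) ≤ y ∧ y ≤ 1 / 2 * (a + √(a ^ 2 - c)) := by
  have hsq : (2 * y - a) ^ 2 ≤ a ^ 2 - c := by nlinarith
  obtain ⟨hlow, hupp⟩ := abs_le.mp (abs_le_sqrt hsq)
  constructor <;> linarith

lemma continuous_exp_sq : Continuous fun t : ℝ ↦ exp (t ^ 2) := by fun_prop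

lemma hasDerivAt_exp_sq (x : ℝ) :
    HasDerivAt (fun y : ℝ ↦ exp (y ^ 2)) (exp (x ^ 2) * (2 * x)) x := by
  simpa using (hasDerivAt_pow 2 x).exp

noncomputable def expSqIntegral (x : ℝ) : ℝ := ∫ t in (0 : ℝ)..x, exp (t ^ 2)

namespace expSqIntegral

lemma hasDerivAt (x : ℝ) : HasDerivAt expSqIntegral (exp (x ^ 2)) x :=
  (continuous_exp_sq.integral_hasStrictDerivAt 0 x).hasDerivAt

@[simp]
lemma zero : expSqIntegral 0 = 0 := intervalIntegral.integral_same

lemma nonneg {x : ℝ} (hx : 0 ≤ x) : 0 ≤ expSqIntegral x :=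
  intervalIntegral.integral_nonneg hx fun _ _ ↦ (exp_pos _).le

lemma le_mul_exp_sq {x : ℝ} (hx : 0 ≤ x) : expSqIntegral x ≤ x * exp (x ^ 2) := by
  have hmono : expSqIntegral x ≤ ∫ _ in (0 : ℝ)..x, exp (x ^ 2) :=
    intervalIntegral.integral_mono_on hx (continuous_exp_sq.intervalIntegrable _ _)
      intervalIntegrable_const fun _ ht ↦ exp_le_exp.mpr (by nlinarith [ht.1, ht.2])
  simpa using hmono

lemma sq_add_pi_div_four_lt {x : ℝ} (hx : 0 ≤ x) :
    expSqIntegral x ^ 2 + π / 4 < exp (x ^ 2) ^ 2 := by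
  have hderiv (y : ℝ) : HasDerivAt (fun y ↦ exp (y ^ 2) ^ 2 - expSqIntegral y ^ 2)
      (2 * exp (y ^ 2) * (2 * y * exp (y ^ 2) - expSqIntegral y)) y := by
    refine (((hasDerivAt_exp_sq y).fun_pow 2).sub ((hasDerivAt y).fun_pow 2)).congr_deriv ?_
    push_cast
    ring
  have hmono := le_of_hasDerivAt_of_nonneg hderiv (fun y hy ↦ mul_nonneg (by positivity)
    (by nlinarith [le_mul_exp_sq hy.le, nonneg hy.le, exp_pos (y ^ 2)])) hx
  norm_num at hmono
  linarith [pi_lt_four]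

lemma pi_div_four_mul_le {x : ℝ} (hx : 0 ≤ x) :
    π / 4 * x ≤ exp (x ^ 2) * expSqIntegral x - x * expSqIntegral x ^ 2 := by
  have hderiv (y : ℝ) : HasDerivAt
      (fun y ↦ exp (y ^ 2) * expSqIntegral y - y * expSqIntegral y ^ 2 - π / 4 * y)
      (exp (y ^ 2) ^ 2 - expSqIntegral y ^ 2 - π / 4) y := by
    refine ((((hasDerivAt_exp_sq y).mul (hasDerivAt y)).sub
      ((hasDerivAt_id' y).mul ((hasDerivAt y).fun_pow 2))).sub
      ((hasDerivAt_id' y).const_mul (π / 4))).congr_deriv ?_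
    push_cast
    ring
  have hmono := le_of_hasDerivAt_of_nonneg hderiv
    (fun y hy ↦ by linarith [sq_add_pi_div_four_lt hy.le]) hx
  simp only [zero, mul_zero, sub_zero] at hmono
  linarith

end expSqIntegral

/-- for every `x > 0`, with `h(x) = ∫₀^x e^{t²} dt`,
`(1/2)(e^{x²}/x - √((e^{x²}/x)² - π)) ≤ h(x) ≤ (1/2)(e^{x²}/x + √((e^{x²}/x)² - π))`. -/
theorem hReal_two_sided_bound (x : ℝ) (hx : 0 < x) :
    (1 / 2) * (Real.exp (x ^ 2) / x -
        Real.sqrt ((Real.exp (x ^ 2) / x) ^ 2 - Real.pi)) ≤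
      (∫ t in (0 : ℝ)..x, Real.exp (t ^ 2)) ∧
    (∫ t in (0 : ℝ)..x, Real.exp (t ^ 2)) ≤
      (1 / 2) * (Real.exp (x ^ 2) / x +
        Real.sqrt ((Real.exp (x ^ 2) / x) ^ 2 - Real.pi)) := by
  apply bounds_of_div_four_le_mul_sub
  change π / 4 ≤ expSqIntegral x * (exp (x ^ 2) / x - expSqIntegral x)
  refine le_of_mul_le_mul_right ?_ hx
  calc π / 4 * x ≤ exp (x ^ 2) * expSqIntegral x - x * expSqIntegral x ^ 2 :=
        expSqIntegral.pi_div_four_mul_le hx.le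
    _ = expSqIntegral x * (exp (x ^ 2) / x - expSqIntegral x) * x := by field_simp
end
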